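/- arXiv:2111.07790 — 5 statements merged into one kernel-verified Lean document; each statement's English description precedes it below -/
import Mathlib

section
/- For every integer H ≥ 2, the double sum ∑_{s=1}^{H-1} ∑_{b=s+1}^{H-1} (b−s) · (1/(b(b+1))) · (1/((H−s)(H−s+1))) equals 3/H − 2H_H/H + 2(H_{H−1} − 1)/(H+1). -/
open Finset

noncomputable def Hn (n : ℕ) : ℝ := ∑ k ∈ Finset.Icc 1 n, (1:ℝ)/k

lemma hn_succ (n : ℕ) : Hn (n+1) = Hn n + 1/((n:ℝ)+1) := by
  unfold Hn
  rw [Finset.sum_Icc_succ_top (by omega)]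
  push_cast; ring

lemma T1 (n : ℕ) : ∑ t ∈ Icc 1 n, (1:ℝ)/((t:ℝ)*((t:ℝ)+1)) = 1 - 1/((n:ℝ)+1) := by
  induction n with
  | zero => simp
  | succ n ih =>
    rw [Finset.sum_Icc_succ_top (by omega), ih]
    have h1 : ((n:ℝ)+1) ≠ 0 := by positivity
    have h2 : ((n:ℝ)+2) ≠ 0 := by positivity
    push_cast
    field_simp
    ring

lemma T2 (n : ℕ) : ∑ t ∈ Icc 1 n, (1:ℝ)/((t:ℝ)+1) = Hn (n+1) - 1 := by
  induction n with
  | zero => simp [Hn]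
  | succ n ih =>
    rw [Finset.sum_Icc_succ_top (by omega), ih, hn_succ (n+1)]
    push_cast; ring

lemma L1 (s n : ℕ) (h : s ≤ n) :
    ∑ b ∈ Icc (s+1) n, ((b:ℝ) - s) * (1/((b:ℝ)*((b:ℝ)+1))) =
      Hn n - Hn s - 1 + ((s:ℝ)+1)/((n:ℝ)+1) := by
  induction n, h using Nat.le_induction with
  | base =>
    have hs : ((s:ℝ)+1) ≠ 0 := by positivity
    rw [Finset.Icc_eq_empty (by omega), Finset.sum_empty, div_self hs]
    ring
  | succ n hn ih =>
    rw [Finset.sum_Icc_succ_top (by omega), ih, hn_succ n]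
    have h1 : ((n:ℝ)+1) ≠ 0 := by positivity
    have h2 : ((n:ℝ)+2) ≠ 0 := by positivity
    push_cast
    field_simp
    ring

lemma flipsum (H : ℕ) (f : ℕ → ℝ) :
    ∑ s ∈ Icc 1 (H-1), f s = ∑ t ∈ Icc 1 (H-1), f (H - t) := by
  refine Finset.sum_nbij' (i := fun s => H - s) (j := fun t => H - t)
    ?_ ?_ ?_ ?_ ?_ <;> intro a ha <;> simp only [Finset.mem_Icc] at ha ⊢
  · omega
  · omega
  · omega
  · omega
  · congr 1; omega

lemma CC (H : ℕ) (hH : 2 ≤ H) :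
    ∑ t ∈ Icc 1 (H-1), Hn (H - t) * (1/((t:ℝ)*((t:ℝ)+1))) =
      Hn (H-1) - (Hn (H-1) + Hn H - 1)/((H:ℝ)+1) := by
  have hswap : ∑ t ∈ Icc 1 (H-1), Hn (H - t) * (1/((t:ℝ)*((t:ℝ)+1))) =
      ∑ k ∈ Icc 1 (H-1), ∑ t ∈ Icc 1 (H - k),
        (1:ℝ)/(k:ℝ) * (1/((t:ℝ)*((t:ℝ)+1))) := by
    rw [show (∑ t ∈ Icc 1 (H-1), Hn (H - t) * (1/((t:ℝ)*((t:ℝ)+1)))) =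
        ∑ t ∈ Icc 1 (H-1), ∑ k ∈ Icc 1 (H - t),
          (1:ℝ)/(k:ℝ) * (1/((t:ℝ)*((t:ℝ)+1))) from by
      refine Finset.sum_congr rfl fun t ht => ?_
      rw [Hn, Finset.sum_mul]]
    exact Finset.sum_comm' (by intro x y; simp [Finset.mem_Icc]; omega)
  rw [hswap]
  have hstep : ∀ k ∈ Icc 1 (H-1),
      (∑ t ∈ Icc 1 (H - k), (1:ℝ)/(k:ℝ) * (1/((t:ℝ)*((t:ℝ)+1)))) =
        (1:ℝ)/(k:ℝ) - 1/((H:ℝ)+1) * ((1:ℝ)/(k:ℝ) + 1/(((H-k:ℕ):ℝ)+1)) := by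
    intro k hk
    simp only [Finset.mem_Icc] at hk
    rw [← Finset.mul_sum, T1]
    have hc : ((H-k:ℕ):ℝ) = (H:ℝ) - (k:ℝ) := by
      push_cast [Nat.cast_sub (by omega : k ≤ H)]; ring
    rw [hc]
    have h1 : (k:ℝ) ≠ 0 := by
      have : 1 ≤ k := hk.1
      positivity
    have h2 : (H:ℝ) - (k:ℝ) + 1 ≠ 0 := by
      have hk1 : (1:ℝ) ≤ ((H-k:ℕ):ℝ) := by exact_mod_cast (by omega : 1 ≤ H - k)
      rw [hc] at hk1
      intro h; linarith
    have h3 : ((H:ℝ)+1) ≠ 0 := by positivity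
    field_simp
    ring
  rw [Finset.sum_congr rfl hstep]
  rw [Finset.sum_sub_distrib, ← Finset.mul_sum, Finset.sum_add_distrib]
  have e1 : ∑ k ∈ Icc 1 (H-1), (1:ℝ)/(k:ℝ) = Hn (H-1) := rfl
  have e2 : ∑ k ∈ Icc 1 (H-1), (1:ℝ)/(((H-k:ℕ):ℝ)+1) =
      Hn H - 1 := by
    rw [← flipsum H (fun k => (1:ℝ)/((k:ℝ)+1))]
    rw [T2, Nat.sub_add_cancel (by omega : 1 ≤ H)]
  rw [e1, e2]
  ring

theorem stmt3 (H : ℕ) (hH : 2 ≤ H) :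
    ∑ s ∈ Finset.Icc 1 (H-1), ∑ b ∈ Finset.Icc (s+1) (H-1),
        ((b:ℝ) - s) * (1/((b:ℝ)*((b:ℝ)+1))) * (1/(((H:ℝ)-s)*((H:ℝ)-s+1))) =
      3/(H:ℝ) - 2*Hn H/(H:ℝ) + 2*(Hn (H-1) - 1)/((H:ℝ)+1) := by
  have hH1 : ((H-1:ℕ):ℝ) = (H:ℝ) - 1 := by
    push_cast [Nat.cast_sub (by omega : 1 ≤ H)]; ring
  have hHne : (H:ℝ) ≠ 0 := by positivity
  have hH1ne : (H:ℝ)+1 ≠ 0 := by positivity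
  -- step 1: inner closed form
  have step1 : ∀ s ∈ Icc 1 (H-1),
      (∑ b ∈ Finset.Icc (s+1) (H-1),
        ((b:ℝ) - s) * (1/((b:ℝ)*((b:ℝ)+1))) * (1/(((H:ℝ)-s)*((H:ℝ)-s+1)))) =
      (fun s : ℕ => (Hn (H-1) - Hn s - 1 + ((s:ℝ)+1)/(H:ℝ)) *
        (1/(((H:ℝ)-s)*((H:ℝ)-s+1)))) s := by
    intro s hs
    simp only [Finset.mem_Icc] at hs
    rw [← Finset.sum_mul, L1 s (H-1) (by omega), hH1]
    ring_nf
  rw [Finset.sum_congr rfl step1]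
  rw [flipsum H (fun s : ℕ => (Hn (H-1) - Hn s - 1 + ((s:ℝ)+1)/(H:ℝ)) *
        (1/(((H:ℝ)-s)*((H:ℝ)-s+1))))]
  -- step 2: termwise split
  have step2 : ∀ t ∈ Icc 1 (H-1),
      (fun s : ℕ => (Hn (H-1) - Hn s - 1 + ((s:ℝ)+1)/(H:ℝ)) *
        (1/(((H:ℝ)-s)*((H:ℝ)-s+1)))) (H - t) =
      (Hn (H-1) - 1 + ((H:ℝ)+1)/(H:ℝ)) * (1/((t:ℝ)*((t:ℝ)+1)))
        - (1/(H:ℝ)) * (1/((t:ℝ)+1))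
        - Hn (H - t) * (1/((t:ℝ)*((t:ℝ)+1))) := by
    intro t ht
    simp only [Finset.mem_Icc] at ht
    have hc : ((H-t:ℕ):ℝ) = (H:ℝ) - (t:ℝ) := by
      push_cast [Nat.cast_sub (by omega : t ≤ H)]; ring
    simp only [hc]
    have h1 : (t:ℝ) ≠ 0 := by
      have : 1 ≤ t := ht.1
      positivity
    have h2 : (t:ℝ)+1 ≠ 0 := by positivity
    have h3 : (H:ℝ) - ((H:ℝ) - (t:ℝ)) = (t:ℝ) := by ring
    rw [h3]
    field_simp
    ring
  rw [Finset.sum_congr rfl step2]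
  rw [Finset.sum_sub_distrib, Finset.sum_sub_distrib,
    ← Finset.mul_sum, ← Finset.mul_sum, T1, T2, CC H hH,
    Nat.sub_add_cancel (by omega : 1 ≤ H), hH1]
  have hhn : Hn H = Hn (H-1) + 1/(H:ℝ) := by
    have := hn_succ (H-1)
    rw [Nat.sub_add_cancel (by omega : 1 ≤ H)] at this
    rw [this, hH1]
    norm_num
  rw [hhn]
  have hne : (H:ℝ) - 1 + 1 ≠ 0 := by
    rw [sub_add_cancel]; exact hHne
  field_simp
  ring
end

section
/- Let H ≥ 4 be an integer. Let OPT(H) = 2·H_H/(H+1) − (H−2)/(H(H−1)) and GFT(H) = H_{H−1}/(H−1) − 7/(12(H−1)) + 1/(2(H−1))². Then for H = 1000, GFT(H)/OPT(H) < 0.495. -/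
open Finset

/-- Auxiliary: `f n = ∑_{k=1}^n ⌊10^7 / k⌋`. -/
def hAux : ℕ → ℕ
  | 0 => 0
  | n+1 => hAux n + 10000000/(n+1)

set_option maxRecDepth 100000 in
lemma hAux_999 : hAux 999 = 74844233 := by decide

lemma Hn_le (n : ℕ) : Hn n * 10000000 ≤ (hAux n : ℝ) + n := by
  induction n with
  | zero => simp [Hn, hAux]
  | succ n ih =>
      have h1 : Hn (n+1) = Hn n + 1/(n+1 : ℕ) := by
        simpa [Hn] using Finset.sum_Icc_succ_top (by omega : 1 ≤ n+1)
          (fun k : ℕ => (1:ℝ)/k)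
      have hk : (0:ℝ) < (n+1 : ℕ) := by positivity
      have hnat : (10000000 : ℕ) < (10000000/(n+1) + 1) * (n+1) := by
        have hd := Nat.div_add_mod 10000000 (n+1)
        have hm : 10000000 % (n+1) < n+1 := Nat.mod_lt _ (Nat.succ_pos n)
        calc 10000000 = (n+1) * (10000000/(n+1)) + 10000000 % (n+1) := hd.symm
          _ < 10000000/(n+1) * (n+1) + (n+1) := by rw [Nat.mul_comm]; omega
          _ = (10000000/(n+1) + 1) * (n+1) := by ring
      have hcast : (10000000:ℝ) < ((10000000/(n+1) : ℕ) + 1) * ((n+1 : ℕ) : ℝ) := by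
        exact_mod_cast hnat
      have h2 : (1/(n+1 : ℕ) : ℝ) * 10000000 ≤ ((10000000/(n+1) : ℕ) : ℝ) + 1 := by
        rw [div_mul_eq_mul_div, div_le_iff₀ hk]
        push_cast at hcast ⊢
        linarith
      have h3 : (hAux (n+1) : ℝ) = (hAux n : ℝ) + ((10000000/(n+1) : ℕ) : ℝ) := by
        simp [hAux]
      rw [h1, h3]
      push_cast
      push_cast at ih h2
      linarith

lemma one_le_Hn_999 : (1:ℝ) ≤ Hn 999 := by
  have h : ∀ k ∈ Finset.Icc 1 999, (0:ℝ) ≤ 1/(k:ℕ) := by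
    intro k _; positivity
  have := Finset.single_le_sum h (by decide : (1:ℕ) ∈ Finset.Icc 1 999)
  simpa [Hn] using this

lemma Hn_1000_eq : Hn 1000 = Hn 999 + 1/1000 := by
  have := Finset.sum_Icc_succ_top (by omega : 1 ≤ 1000) (fun k : ℕ => (1:ℝ)/k)
  simpa [Hn] using this

theorem stmt9 :
    (Hn 999/(999:ℝ) - 7/(12*999) + 1/(2*999)^2) /
      (2*Hn 1000/(1001:ℝ) - 998/(1000*999)) < 0.495 := by
  have hup : Hn 999 ≤ 74845232 / 10000000 := by
    have := Hn_le 999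
    rw [hAux_999] at this
    norm_num at this ⊢
    linarith
  have hlo := one_le_Hn_999
  rw [Hn_1000_eq]
  set x := Hn 999 with hx
  have hden : (0:ℝ) < 2*(x + 1/1000)/(1001:ℝ) - 998/(1000*999) := by
    norm_num
    linarith
  rw [div_lt_iff₀ hden]
  norm_num
  linarith
end

section
/- Let OPT(H) = 2·H_H/(H+1) − (H−2)/(H(H−1)) and GFT(H) = H_{H−1}/(H−1) − 7/(12(H−1)) + 1/(2(H−1))². Then for every integer H > 120, GFT(H)/OPT(H) < 1/2. -/
set_option maxRecDepth 8000


open Finset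

lemma Hn_succ (m : ℕ) : Hn (m+1) = Hn m + 1/(m+1) := by
  rw [Hn, Hn, Finset.sum_Icc_succ_top (by omega : 1 ≤ m+1)]
  push_cast
  ring

lemma Hn_base : Hn 120 < 140/24 := by
  have : Hn 120 = ∑ i ∈ Finset.range 120, (1:ℝ)/(i+1) := by
    rw [Hn, ← Finset.Ico_add_one_right_eq_Icc, Finset.sum_Ico_eq_sum_range]
    norm_num
  rw [this]
  norm_num [Finset.sum_range_succ]

lemma Hn_bound (m : ℕ) (hm : 120 ≤ m) : Hn m < ((m:ℝ) + 20)/24 := by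
  induction m, hm using Nat.le_induction with
  | base => have := Hn_base; push_cast; linarith
  | succ n hn ih =>
      rw [Hn_succ]
      have hn' : (120:ℝ) ≤ n := by exact_mod_cast hn
      have h1 : (1:ℝ)/(n+1) ≤ 1/24 := by
        apply div_le_div_of_nonneg_left (by norm_num) (by norm_num)
        linarith
      push_cast
      linarith

lemma Hn_one_le (m : ℕ) (hm : 1 ≤ m) : 1 ≤ Hn m := by
  rw [Hn]
  have h := Finset.single_le_sum (f := fun k : ℕ => (1:ℝ)/k)
    (fun i _ => by positivity) (Finset.mem_Icc.mpr ⟨le_refl 1, hm⟩)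
  simpa using h

theorem stmt10 (H : ℕ) (hH : 120 < H) :
    (Hn (H-1)/((H:ℝ)-1) - 7/(12*((H:ℝ)-1)) + 1/(2*((H:ℝ)-1))^2) /
      (2*Hn H/((H:ℝ)+1) - ((H:ℝ)-2)/((H:ℝ)*((H:ℝ)-1))) < 1/2 := by
  obtain ⟨m, rfl⟩ : ∃ m, H = m + 1 := ⟨H - 1, by omega⟩
  set n : ℝ := ((m+1 : ℕ):ℝ) with hn
  have hn121 : (121:ℝ) ≤ n := by rw [hn]; exact_mod_cast hH
  have hmn : ((m:ℕ):ℝ) = n - 1 := by rw [hn]; push_cast; ring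
  have hHm : (m + 1) - 1 = m := by omega
  rw [hHm]
  set a : ℝ := Hn m with ha
  have hrec : Hn (m+1) = a + 1/n := by
    rw [Hn_succ, hn]; push_cast; ring
  have hub : a < (n + 19)/24 := by
    have := Hn_bound m (by omega)
    rw [hmn] at this; linarith
  have hlb : 1 ≤ a := Hn_one_le m (by omega)
  have h0 : (0:ℝ) < n - 1 := by linarith
  have h1 : (0:ℝ) < n := by linarith
  have h2 : (0:ℝ) < n + 1 := by linarith
  rw [hrec]
  have hne0 : n ≠ 0 := ne_of_gt h1
  have hne1 : n - 1 ≠ 0 := ne_of_gt h0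
  have hne2 : n + 1 ≠ 0 := ne_of_gt h2
  clear_value a n
  have hO : 0 < 2*(a + 1/n)/(n+1) - (n-2)/(n*(n-1)) := by
    rw [sub_pos, div_lt_div_iff₀ (by positivity) h2]
    have hexp : 2*(a + 1/n)*(n*(n-1)) = 2*a*n*(n-1) + 2*(n-1) := by
      field_simp
    rw [hexp]
    nlinarith [mul_le_mul_of_nonneg_right hlb (le_of_lt (mul_pos h1 h0)), mul_pos h1 h0]
  rw [div_lt_iff₀ hO]
  have hfrac : (n+1)/(2*(n-1)) ≤ 1 := by
    rw [div_le_one (by linarith)]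
    linarith
  have key : 1/2 * (2*(a + 1/n)/(n+1) - (n-2)/(n*(n-1)))
      - (a/(n-1) - 7/(12*(n-1)) + 1/(2*(n-1))^2)
      = ((n+25)/6 - (n+1)/(2*(n-1)) - 4*a) / (2*(n-1)*(n+1)) := by
    field_simp
    ring
  have hnum : 0 < (n+25)/6 - (n+1)/(2*(n-1)) - 4*a := by linarith
  have hden : 0 < 2*(n-1)*(n+1) := by positivity
  have := div_pos hnum hden
  linarith
end

section
/- Let OPT(H) = 2·H_H/(H+1) − (H−2)/(H(H−1)) and GFT(H) = H_{H−1}/(H−1) − 7/(12(H−1)) + 1/(2(H−1))². Then for all integers H > 2, GFT(H)/OPT(H) ≤ 1/2 + 1/(H−1) − 1/(12(2·H_H − 1)). -/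
open Finset

theorem stmt13 (H : ℕ) (hH : 2 < H) :
    (Hn (H-1)/((H:ℝ)-1) - 7/(12*((H:ℝ)-1)) + 1/(2*((H:ℝ)-1))^2) /
      (2*Hn H/((H:ℝ)+1) - ((H:ℝ)-2)/((H:ℝ)*((H:ℝ)-1))) ≤
    1/2 + 1/((H:ℝ)-1) - 1/(12*(2*Hn H - 1)) := by
  have hx : (3:ℝ) ≤ (H:ℝ) := by exact_mod_cast hH
  have hx0 : (0:ℝ) < (H:ℝ) := by linarith
  have hx1 : (0:ℝ) < (H:ℝ) - 1 := by linarith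
  have hxp : (0:ℝ) < (H:ℝ) + 1 := by linarith
  -- h ≥ 1
  have hh1 : (1:ℝ) ≤ Hn H := by
    have h1mem : 1 ∈ Finset.Icc 1 H := by simp; omega
    have := Finset.single_le_sum (f := fun k : ℕ => (1:ℝ)/k)
      (fun i _ => by positivity) h1mem
    simpa [Hn] using this
  set h := Hn H with hh
  -- split off last term
  have hsplit : Hn (H-1) = h - 1/(H:ℝ) := by
    have hH1 : H = (H-1) + 1 := by omega
    have : Hn H = Hn (H-1) + 1/((H:ℝ)) := by
      rw [Hn, Hn]
      rw [show Finset.Icc 1 H = Finset.Icc 1 ((H-1)+1) by rw [← hH1]]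
      rw [Finset.sum_Icc_succ_top (by omega : 1 ≤ (H-1)+1)]
      congr 2
      · push_cast [← hH1]; ring
    rw [hh]
    linarith [this]
  have hth : (0:ℝ) < 2*h - 1 := by linarith
  -- OPT positive
  have hO : (0:ℝ) < 2*h/((H:ℝ)+1) - ((H:ℝ)-2)/((H:ℝ)*((H:ℝ)-1)) := by
    rw [sub_pos, div_lt_div_iff₀ (by positivity) hxp]
    nlinarith [mul_pos hx0 hx1, sq_nonneg ((H:ℝ)-3)]
  rw [div_le_iff₀ hO, ← sub_nonneg, hsplit]
  have hD : (0:ℝ) < 12*(2*h-1)*(H:ℝ)*((H:ℝ)-1)^2*((H:ℝ)+1) := by positivity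
  have key : (1/2 + 1/((H:ℝ)-1) - 1/(12*(2*h - 1))) *
      (2*h/((H:ℝ)+1) - ((H:ℝ)-2)/((H:ℝ)*((H:ℝ)-1))) -
      ((h - 1/(H:ℝ))/((H:ℝ)-1) - 7/(12*((H:ℝ)-1)) + 1/(2*((H:ℝ)-1))^2) =
      (11*(H:ℝ)^2*(2*h-1) + (H:ℝ)*(14*h-9) + 2) /
        (12*(2*h-1)*(H:ℝ)*((H:ℝ)-1)^2*((H:ℝ)+1)) := by
    field_simp
    ring
  rw [key]
  apply div_nonneg _ (le_of_lt hD)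
  nlinarith [sq_nonneg (H:ℝ)]
end

section
/- Let H ≥ 4. Under the hard distributions of the paper — seller: P(s=0)=P(s=1)=1/(2(H−1)), P(s=y)=1/((H−y)(H−y+1)) for 2 ≤ y ≤ H−1; buyer (mirror image): P(b=H)=P(b=H−1)=1/(2(H−1)), P(b=x)=1/(x(x+1)) for 1 ≤ x ≤ H−2 — the first-best gains from trade E[max(b−s,0)] equals 2·H_H/(H+1) − (H−2)/(H(H−1)). -/
open Finset

lemma indcount (H x y : ℕ) (hx1 : 1 ≤ x) (hxH : x ≤ H) :
    ∑ t ∈ Icc 0 (H-1), (if y ≤ t ∧ t + 1 ≤ x then (1:ℝ) else 0) = max ((x:ℝ) - y) 0 := by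
  rw [← Finset.sum_filter]
  have hfil : (Icc 0 (H-1)).filter (fun t => y ≤ t ∧ t + 1 ≤ x) = Icc y (x-1) := by
    ext t; simp [Finset.mem_filter, Finset.mem_Icc]; omega
  rw [hfil]
  simp [Nat.card_Icc]
  rcases le_or_gt y x with h | h
  · have h1 : x - 1 + 1 - y = x - y := by omega
    have h2 : (y:ℝ) ≤ x := by exact_mod_cast h
    rw [h1, max_eq_left (by linarith)]
    push_cast [h]; ring
  · have h1 : x - 1 + 1 - y = 0 := by omega
    have h2 : (x:ℝ) < y := by exact_mod_cast h
    rw [h1, max_eq_right (by linarith)]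
    simp

lemma swaplem (H : ℕ) (f g : ℕ → ℝ) :
    ∑ y ∈ Icc 0 (H-1), ∑ x ∈ Icc 1 H, f y * g x * max ((x:ℝ) - y) 0
      = ∑ t ∈ Icc 0 (H-1), (∑ y ∈ Icc 0 t, f y) * (∑ x ∈ Icc (t+1) H, g x) := by
  have step1 : ∀ y ∈ Icc 0 (H-1), ∀ x ∈ Icc 1 H,
      f y * g x * max ((x:ℝ) - y) 0
        = ∑ t ∈ Icc 0 (H-1), (if y ≤ t then f y else 0) * (if t + 1 ≤ x then g x else 0) := by
    intro y hy x hx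
    simp only [Finset.mem_Icc] at hx
    rw [← indcount H x y hx.1 hx.2, Finset.mul_sum]
    refine Finset.sum_congr rfl fun t _ => ?_
    by_cases h1 : y ≤ t <;> by_cases h2 : t + 1 ≤ x <;> simp [h1, h2]
  calc ∑ y ∈ Icc 0 (H-1), ∑ x ∈ Icc 1 H, f y * g x * max ((x:ℝ) - y) 0
      = ∑ y ∈ Icc 0 (H-1), ∑ x ∈ Icc 1 H, ∑ t ∈ Icc 0 (H-1),
          (if y ≤ t then f y else 0) * (if t + 1 ≤ x then g x else 0) := by
        refine Finset.sum_congr rfl fun y hy => Finset.sum_congr rfl fun x hx => step1 y hy x hx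
    _ = ∑ t ∈ Icc 0 (H-1), ∑ y ∈ Icc 0 (H-1), ∑ x ∈ Icc 1 H,
          (if y ≤ t then f y else 0) * (if t + 1 ≤ x then g x else 0) := by
        rw [show (∑ y ∈ Icc 0 (H-1), ∑ x ∈ Icc 1 H, ∑ t ∈ Icc 0 (H-1),
              (if y ≤ t then f y else 0) * (if t + 1 ≤ x then g x else 0))
            = ∑ y ∈ Icc 0 (H-1), ∑ t ∈ Icc 0 (H-1), ∑ x ∈ Icc 1 H,
              (if y ≤ t then f y else 0) * (if t + 1 ≤ x then g x else 0)
          from Finset.sum_congr rfl fun y _ => Finset.sum_comm]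
        exact Finset.sum_comm
    _ = ∑ t ∈ Icc 0 (H-1), (∑ y ∈ Icc 0 t, f y) * (∑ x ∈ Icc (t+1) H, g x) := by
        refine Finset.sum_congr rfl fun t ht => ?_
        simp only [Finset.mem_Icc] at ht
        rw [← Finset.sum_mul_sum]
        congr 1
        · rw [← Finset.sum_filter]
          congr 1
          ext y; simp [Finset.mem_Icc]; omega
        · rw [← Finset.sum_filter]
          congr 1
          ext x; simp [Finset.mem_Icc]; omega


section
variable (H : ℕ) (hH : 4 ≤ H) (Ps Pb : ℕ → ℝ)
variable (hPs : ∀ y, Ps y = if y = 0 ∨ y = 1 then 1/(2*((H:ℝ)-1))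
        else 1/(((H:ℝ)-y)*((H:ℝ)-y+1)))
variable (hPb : ∀ x, Pb x = if x = H ∨ x = H - 1 then 1/(2*((H:ℝ)-1))
        else 1/((x:ℝ)*((x:ℝ)+1)))

include hH hPs in
lemma Flem : ∀ t, 1 ≤ t → t ≤ H - 1 → ∑ y ∈ Icc 0 t, Ps y = 1/((H:ℝ)-t) := by
  intro t
  induction t with
  | zero => omega
  | succ n ih =>
    intro _ hn
    rcases Nat.eq_or_lt_of_le (show 1 ≤ n + 1 from by omega) with h1 | h1
    · -- n = 0, t = 1
      have hn0 : n = 0 := by omega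
      subst hn0
      rw [show Icc 0 1 = {0, 1} from rfl]
      rw [Finset.sum_insert (by simp), Finset.sum_singleton, hPs 0, hPs 1]
      have : ((H:ℝ) - 1) ≠ 0 := by
        have : (4:ℝ) ≤ H := by exact_mod_cast hH
        linarith
      simp only [if_pos (Or.inl rfl), if_pos (Or.inr rfl)]
      push_cast
      field_simp
      norm_num
      rw [← mul_add, mul_inv_cancel_left₀ this]; norm_num
    · -- n ≥ 1
      have hn1 : 1 ≤ n := by omega
      rw [Finset.sum_Icc_succ_top (by omega), ih hn1 (by omega), hPs (n+1)]
      have hne : ¬(n + 1 = 0 ∨ n + 1 = 1) := by omega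
      rw [if_neg hne]
      have hb1 : (1:ℝ) ≤ (H:ℝ) - (n+1:ℕ) := by
        have : (n:ℝ) + 2 ≤ H := by exact_mod_cast (show n + 2 ≤ H by omega)
        push_cast; linarith
      have h2 : ((H:ℝ) - (n+1:ℕ)) ≠ 0 := by linarith
      have h3 : ((H:ℝ) - (n+1:ℕ) + 1) ≠ 0 := by linarith
      have h4 : ((H:ℝ) - n) ≠ 0 := by push_cast at hb1 ⊢; linarith
      push_cast at h2 h3 h4 ⊢
      field_simp
      ring

include hH hPb in
lemma Gpartlem : ∀ t, 1 ≤ t → t ≤ H - 2 → ∑ x ∈ Icc 1 t, Pb x = (t:ℝ)/((t:ℝ)+1) := by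
  intro t
  induction t with
  | zero => omega
  | succ n ih =>
    intro _ hn
    rcases Nat.eq_or_lt_of_le (show 1 ≤ n + 1 from by omega) with h1 | h1
    · have hn0 : n = 0 := by omega
      subst hn0
      rw [show Icc 1 1 = {1} from rfl, Finset.sum_singleton, hPb 1]
      rw [if_neg (by omega)]
      norm_num
    · have hn1 : 1 ≤ n := by omega
      rw [Finset.sum_Icc_succ_top (by omega), ih hn1 (by omega), hPb (n+1)]
      rw [if_neg (by omega)]
      have h2 : ((n:ℝ) + 1) ≠ 0 := by positivity
      have h3 : ((n:ℝ) + 2) ≠ 0 := by positivity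
      push_cast
      field_simp
      ring

include hH hPb in
lemma Totlem : ∑ x ∈ Icc 1 H, Pb x = 1 := by
  have e1 : H = (H - 1) + 1 := by omega
  have e2 : H - 1 = (H - 2) + 1 := by omega
  rw [e1, Finset.sum_Icc_succ_top (by omega), ← e1, e2,
      Finset.sum_Icc_succ_top (by omega), ← e2]
  rw [Gpartlem H hH Pb hPb (H-2) (by omega) le_rfl]
  rw [hPb (H-1), hPb H, if_pos (Or.inr rfl), if_pos (Or.inl rfl)]
  have h4 : (4:ℝ) ≤ H := by exact_mod_cast hH
  have hc : ((H:ℝ) - 2) = ((H-2 : ℕ) : ℝ) := by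
    have : ((H-2:ℕ):ℝ) = (H:ℝ) - 2 := by
      push_cast [Nat.cast_sub (by omega : 2 ≤ H)]; ring
    linarith [this]
  rw [← hc]
  have h1 : ((H:ℝ) - 1) ≠ 0 := by linarith
  have h2 : ((H:ℝ) - 2 + 1) ≠ 0 := by linarith
  field_simp
  ring

include hH hPb in
lemma Glem : ∀ t, t ≤ H - 2 → ∑ x ∈ Icc (t+1) H, Pb x = 1/((t:ℝ)+1) := by
  intro t ht
  rcases Nat.eq_zero_or_pos t with h0 | h0
  · subst h0; simpa using Totlem H hH Pb hPb
  · have hsplit : Icc 1 t ∪ Icc (t+1) H = Icc 1 H := by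
      ext z; simp [Finset.mem_union, Finset.mem_Icc]; omega
    have hdisj : Disjoint (Icc 1 t) (Icc (t+1) H) := by
      rw [Finset.disjoint_left]; intro z hz1 hz2
      simp [Finset.mem_Icc] at hz1 hz2; omega
    have := Finset.sum_union hdisj (f := Pb)
    rw [hsplit, Totlem H hH Pb hPb, Gpartlem H hH Pb hPb t h0 ht] at this
    have ht1 : ((t:ℝ) + 1) ≠ 0 := by positivity
    have : (1:ℝ) - (t:ℝ)/((t:ℝ)+1) = 1/((t:ℝ)+1) := by field_simp; ring
    linarith [‹(1:ℝ) = (t:ℝ)/((t:ℝ)+1) + ∑ x ∈ Icc (t+1) H, Pb x›]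
end


lemma reidx1 (H : ℕ) (hH : 4 ≤ H) :
    ∑ t ∈ Icc 1 (H-2), 1/((t:ℝ)+1) = ∑ k ∈ Icc 2 (H-1), 1/(k:ℝ) := by
  refine Finset.sum_nbij' (fun t => t + 1) (fun k => k - 1) ?_ ?_ ?_ ?_ ?_
  · intro t ht; simp [Finset.mem_Icc] at *; omega
  · intro k hk; simp [Finset.mem_Icc] at *; omega
  · intro t ht; simp
  · intro k hk; simp [Finset.mem_Icc] at hk; omega
  · intro t ht; push_cast; ring

lemma reidx2 (H : ℕ) (hH : 4 ≤ H) :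
    ∑ t ∈ Icc 1 (H-2), 1/((H:ℝ)-(t:ℝ)) = ∑ k ∈ Icc 2 (H-1), 1/(k:ℝ) := by
  refine Finset.sum_nbij' (fun t => H - t) (fun k => H - k) ?_ ?_ ?_ ?_ ?_
  · intro t ht; simp [Finset.mem_Icc] at *; omega
  · intro k hk; simp [Finset.mem_Icc] at *; omega
  · intro t ht; simp [Finset.mem_Icc] at ht; omega
  · intro k hk; simp [Finset.mem_Icc] at hk; omega
  · intro t ht
    simp [Finset.mem_Icc] at ht
    congr 1
    push_cast [Nat.cast_sub (by omega : t ≤ H)]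
    ring

lemma Csum (H : ℕ) (hH : 4 ≤ H) :
    ∑ k ∈ Icc 2 (H-1), 1/(k:ℝ) = Hn H - 1 - 1/(H:ℝ) := by
  have e1 : H = (H - 1) + 1 := by omega
  have h1 : Hn H = Hn (H-1) + 1/(H:ℝ) := by
    rw [Hn, e1, Finset.sum_Icc_succ_top (by omega), ← e1, ← Hn]
  have h2 : Hn (H-1) = 1 + ∑ k ∈ Icc 2 (H-1), 1/(k:ℝ) := by
    rw [Hn]
    have : Icc 1 (H-1) = insert 1 (Icc 2 (H-1)) := by
      ext z; simp [Finset.mem_Icc]; omega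
    rw [this, Finset.sum_insert (by simp)]
    norm_num
  rw [h1, h2]; ring


theorem stmt18 (H : ℕ) (hH : 4 ≤ H)
    (Ps Pb : ℕ → ℝ)
    (hPs : ∀ y, Ps y = if y = 0 ∨ y = 1 then 1/(2*((H:ℝ)-1))
        else 1/(((H:ℝ)-y)*((H:ℝ)-y+1)))
    (hPb : ∀ x, Pb x = if x = H ∨ x = H - 1 then 1/(2*((H:ℝ)-1))
        else 1/((x:ℝ)*((x:ℝ)+1))) :
    ∑ y ∈ Finset.Icc 0 (H-1), ∑ x ∈ Finset.Icc 1 H,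
        Ps y * Pb x * max ((x:ℝ) - y) 0 =
      2*Hn H/((H:ℝ)+1) - ((H:ℝ)-2)/((H:ℝ)*((H:ℝ)-1)) := by
  have h4 : (4:ℝ) ≤ (H:ℝ) := by exact_mod_cast hH
  rw [swaplem]
  -- split off top term t = H-1 and bottom term t = 0
  have e2 : H - 1 = (H - 2) + 1 := by omega
  rw [e2, Finset.sum_Icc_succ_top (by omega), ← e2]
  have hbot : Icc 0 (H-2) = insert 0 (Icc 1 (H-2)) := by
    ext z; simp [Finset.mem_Icc]; omega
  rw [hbot, Finset.sum_insert (by simp)]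
  -- evaluate the three pieces
  have hF0 : ∑ y ∈ Icc 0 0, Ps y = 1/(2*((H:ℝ)-1)) := by
    simp [hPs 0]
  have hG0 : ∑ x ∈ Icc (0+1) H, Pb x = 1 := by
    simpa using Glem H hH Pb hPb 0 (by omega)
  have hFtop : ∑ y ∈ Icc 0 (H-1), Ps y = 1 := by
    rw [Flem H hH Ps hPs (H-1) (by omega) le_rfl]
    rw [Nat.cast_sub (by omega : 1 ≤ H)]
    norm_num
  have hGtop : ∑ x ∈ Icc ((H-1)+1) H, Pb x = 1/(2*((H:ℝ)-1)) := by
    have : (H-1)+1 = H := by omega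
    rw [this, Finset.Icc_self, Finset.sum_singleton, hPb H, if_pos (Or.inl rfl)]
  rw [hF0, hG0, hFtop, hGtop]
  -- middle sum
  have hmid : ∑ t ∈ Icc 1 (H-2), (∑ y ∈ Icc 0 t, Ps y) * (∑ x ∈ Icc (t+1) H, Pb x)
      = 1/((H:ℝ)+1) * (∑ t ∈ Icc 1 (H-2), 1/((t:ℝ)+1)
          + ∑ t ∈ Icc 1 (H-2), 1/((H:ℝ)-(t:ℝ))) := by
    rw [← Finset.sum_add_distrib, Finset.mul_sum]
    refine Finset.sum_congr rfl fun t ht => ?_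
    simp only [Finset.mem_Icc] at ht
    rw [Flem H hH Ps hPs t ht.1 (by omega), Glem H hH Pb hPb t ht.2]
    have hc : (t:ℝ) ≤ (H:ℝ) - 2 := by
      have : (t:ℝ) ≤ ((H-2:ℕ):ℝ) := by exact_mod_cast ht.2
      rw [Nat.cast_sub (by omega : 2 ≤ H)] at this
      push_cast at this; linarith
    have h1 : ((H:ℝ) - t) ≠ 0 := by linarith
    have h2 : ((t:ℝ) + 1) ≠ 0 := by positivity
    have h3 : ((H:ℝ) + 1) ≠ 0 := by linarith
    field_simp
    ring
  rw [hmid, reidx1 H hH, reidx2 H hH, Csum H hH]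
  have h1 : ((H:ℝ) - 1) ≠ 0 := by linarith
  have h2 : ((H:ℝ) + 1) ≠ 0 := by linarith
  have h3 : (H:ℝ) ≠ 0 := by linarith
  field_simp
  ring
end
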